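/- There exists a finite connected outerplanar simple graph G with connected game chromatic number exactly 4, i.e., χ_cg(G) = 4. -/

import Mathlib

open scoped Classical

namespace ConnGame

variable {V : Type*}

/-- A move `(v, a)` is proper at the partial coloring `c`: `v` is uncolored and
no neighbor of `v` already has color `a`. -/
def ProperMove (G : SimpleGraph V) {k : ℕ} (c : V → Option (Fin k)) (v : V) (a : Fin k) : Prop :=
  c v = none ∧ ∀ u, G.Adj v u → c u ≠ some a

/-- Connectivity condition on a move: either no vertex is colored yet (first move),
or the chosen vertex has at least one colored neighbor.  This guarantees that the set
of colored vertices induces a connected subgraph after each move. -/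
def ConnMove (G : SimpleGraph V) {k : ℕ} (c : V → Option (Fin k)) (v : V) : Prop :=
  (∀ u, c u = none) ∨ ∃ u, G.Adj v u ∧ (c u).isSome

/-- A legal move in the coloring game (connected version when `conn = true`). -/
def LegalMove (conn : Bool) (G : SimpleGraph V) {k : ℕ}
    (c : V → Option (Fin k)) (v : V) (a : Fin k) : Prop :=
  ProperMove G c v a ∧ (conn = true → ConnMove G c v)

/-- The position obtained by coloring vertex `v` with color `a`. -/
def play [DecidableEq V] {k : ℕ} (c : V → Option (Fin k)) (v : V) (a : Fin k) :
    V → Option (Fin k) :=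
  Function.update c v (some a)

/-- Alice has a winning strategy in the (connected, if `conn`) coloring game with `k`
colors, starting from position `c`, with `n` moves remaining, where `aliceTurn` records
whose turn it is.  Alice wins exactly if all vertices eventually get colored. -/
def AliceWinsFrom [DecidableEq V] (conn : Bool) (G : SimpleGraph V) (k : ℕ) :
    ℕ → Bool → (V → Option (Fin k)) → Prop
  | 0, _, c => ∀ v, (c v).isSome
  | n + 1, aliceTurn, c =>
    (∀ v, (c v).isSome) ∨
      (if aliceTurn then
        ∃ v a, LegalMove conn G c v a ∧ AliceWinsFrom conn G k n false (play c v a)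
      else
        (∃ v a, LegalMove conn G c v a) ∧
          ∀ v a, LegalMove conn G c v a → AliceWinsFrom conn G k n true (play c v a))

/-- Bob has a winning strategy in the (connected, if `conn`) coloring game with `k`
colors, from position `c` with `n` moves remaining.  Bob wins exactly if the game ends
(no legal move is available) while some vertex is still uncolored. -/
def BobWinsFrom [DecidableEq V] (conn : Bool) (G : SimpleGraph V) (k : ℕ) :
    ℕ → Bool → (V → Option (Fin k)) → Prop
  | 0, _, c => ∃ v, c v = none
  | n + 1, aliceTurn, c =>
    (∃ v, c v = none) ∧
      (if aliceTurn then
        ∀ v a, LegalMove conn G c v a → BobWinsFrom conn G k n false (play c v a)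
      else
        (¬ ∃ v a, LegalMove conn G c v a) ∨
          ∃ v a, LegalMove conn G c v a ∧ BobWinsFrom conn G k n true (play c v a))

/-- Alice has a winning strategy in the (connected, if `conn`) coloring game on `G`
with `k` colors (Alice moves first, starting from the all-uncolored position). -/
def AliceWinsColoringGame [Fintype V] [DecidableEq V] (conn : Bool) (G : SimpleGraph V)
    (k : ℕ) : Prop :=
  AliceWinsFrom conn G k (Fintype.card V) true fun _ => none

/-- Bob has a winning strategy in the (connected, if `conn`) coloring game on `G`
with `k` colors. -/
def BobWinsColoringGame [Fintype V] [DecidableEq V] (conn : Bool) (G : SimpleGraph V)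
    (k : ℕ) : Prop :=
  BobWinsFrom conn G k (Fintype.card V) true fun _ => none

/-- The game chromatic number: the least `k` such that Alice wins the coloring game
on `G` with `k` colors. -/
noncomputable def gameChromaticNumber [Fintype V] [DecidableEq V] (G : SimpleGraph V) : ℕ :=
  sInf {k | AliceWinsColoringGame false G k}

/-- The connected game chromatic number: the least `k` such that Alice wins the
connected coloring game on `G` with `k` colors. -/
noncomputable def connGameChromaticNumber [Fintype V] [DecidableEq V] (G : SimpleGraph V) : ℕ :=
  sInf {k | AliceWinsColoringGame true G k}

/-- A legal move in the marking game (connected version when `conn = true`):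
mark an unmarked vertex, which (in the connected game) must have a marked neighbor
unless no vertex is marked yet. -/
def MarkLegal (conn : Bool) (G : SimpleGraph V) (M : Finset V) (v : V) : Prop :=
  v ∉ M ∧ (conn = true → (M = ∅ ∨ ∃ u ∈ M, G.Adj u v))

/-- The marking-game objective for parameter `k`: every unmarked vertex has at most
`k - 1` marked neighbors. -/
def MarkGood (G : SimpleGraph V) (k : ℕ) (M : Finset V) : Prop :=
  ∀ v ∉ M, (M.filter fun u => G.Adj u v).card < k

/-- Alice has a strategy in the (connected, if `conn`) marking game, from position `M`
with `n` moves remaining, guaranteeing that at every moment every unmarked vertex has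
at most `k - 1` marked neighbors. -/
def AliceWinsMarkingFrom [DecidableEq V] (conn : Bool) (G : SimpleGraph V) (k : ℕ) :
    ℕ → Bool → Finset V → Prop
  | 0, _, M => MarkGood G k M
  | n + 1, aliceTurn, M =>
    MarkGood G k M ∧
      (if aliceTurn then
        ∃ v, MarkLegal conn G M v ∧ AliceWinsMarkingFrom conn G k n false (insert v M)
      else
        ∀ v, MarkLegal conn G M v → AliceWinsMarkingFrom conn G k n true (insert v M))

/-- Alice achieves the marking-game bound `k` on `G` (connected version if `conn`). -/
def AliceWinsMarkingGame [Fintype V] [DecidableEq V] (conn : Bool) (G : SimpleGraph V)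
    (k : ℕ) : Prop :=
  AliceWinsMarkingFrom conn G k (Fintype.card V) true ∅

/-- The game coloring number: the least `k` for which Alice has a strategy in the
marking game guaranteeing that every unmarked vertex always has at most `k - 1`
marked neighbors. -/
noncomputable def gameColoringNumber [Fintype V] [DecidableEq V] (G : SimpleGraph V) : ℕ :=
  sInf {k | AliceWinsMarkingGame false G k}

/-- The connected game coloring number. -/
noncomputable def connGameColoringNumber [Fintype V] [DecidableEq V] (G : SimpleGraph V) : ℕ :=
  sInf {k | AliceWinsMarkingGame true G k}

/-- `H` is a minor of `G`: there is a family of nonempty, pairwise disjoint,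
connected branch sets in `G` indexed by the vertices of `H`, with an edge of `G`
between the branch sets of any two adjacent vertices of `H`. -/
def IsMinorOf {W : Type*} (H : SimpleGraph W) (G : SimpleGraph V) : Prop :=
  ∃ f : W → Set V,
    (∀ w, (f w).Nonempty) ∧
    (∀ w, ((G.induce (f w)).Connected)) ∧
    (∀ w w', w ≠ w' → Disjoint (f w) (f w')) ∧
    (∀ w w', H.Adj w w' → ∃ u ∈ f w, ∃ v ∈ f w', G.Adj u v)

/-- A graph is outerplanar iff it contains neither `K₄` nor `K_{2,3}` as a minor. -/
def Outerplanar (G : SimpleGraph V) : Prop :=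
  ¬ IsMinorOf (SimpleGraph.completeGraph (Fin 4)) G ∧
  ¬ IsMinorOf (completeBipartiteGraph (Fin 2) (Fin 3)) G

end ConnGame


/-!
The hexagon `0 1 2 3 4 5` triangulated by the chords `15`, `25`, `24` is a maximal outerplanar
graph. It contains a triangle, and a won game ends in a proper colouring, so Alice loses with
fewer than three colours. With three colours Bob wins and with four Alice wins; both are settled
by evaluating the game tree. Outerplanarity is settled by an exhaustive search as well: the branch
sets of a minor model are pairwise disjoint, pairwise touching along the edges of the minor, and
have no isolated vertex, and no such families of finsets realise `K₄` or `K_{2,3}`.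
-/

namespace ConnGame

open SimpleGraph

section Colorable

variable {V : Type*} {G : SimpleGraph V} {k : ℕ}

def IsProperPartial (G : SimpleGraph V) (c : V → Option (Fin k)) : Prop :=
  ∀ ⦃u v⦄, G.Adj u v → ∀ a, c u = some a → c v ≠ some a

lemma IsProperPartial.play [DecidableEq V] {c : V → Option (Fin k)} (hc : IsProperPartial G c)
    {v : V} {a : Fin k} (hmove : ProperMove G c v a) : IsProperPartial G (play c v a) := by
  intro x y hxy b hx hy
  simp only [ConnGame.play, Function.update_apply] at hx hy
  split_ifs at hx hy with hxv hyv hyv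
  · exact hxy.ne (hxv.trans hyv.symm)
  · exact hmove.2 y (hxv ▸ hxy) (Option.some_inj.1 hx ▸ hy)
  · exact hmove.2 x (hyv ▸ hxy.symm) (Option.some_inj.1 hy ▸ hx)
  · exact hc hxy b hx hy

lemma IsProperPartial.colorable {c : V → Option (Fin k)} (hc : IsProperPartial G c)
    (hfull : ∀ v, (c v).isSome) : G.Colorable k :=
  ⟨Coloring.mk (fun v => (c v).get (hfull v)) fun huv heq =>
    hc huv _ (Option.some_get _).symm (by rw [heq]; exact (Option.some_get _).symm)⟩

lemma AliceWinsFrom.colorable [DecidableEq V] {conn : Bool} {n : ℕ} {b : Bool}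
    {c : V → Option (Fin k)} (hwin : AliceWinsFrom conn G k n b c) (hc : IsProperPartial G c) :
    G.Colorable k := by
  induction n generalizing b c with
  | zero => exact hc.colorable hwin
  | succ n ih =>
    rcases hwin with hfull | hwin
    · exact hc.colorable hfull
    cases b
    · obtain ⟨⟨v, a, hmove⟩, hall⟩ := hwin
      exact ih (hall v a hmove) (hc.play hmove.1)
    · obtain ⟨v, a, hmove, hnext⟩ := hwin
      exact ih hnext (hc.play hmove.1)

lemma AliceWinsColoringGame.colorable [Fintype V] [DecidableEq V] {conn : Bool}
    (hwin : AliceWinsColoringGame conn G k) : G.Colorable k :=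
  AliceWinsFrom.colorable hwin fun _ _ _ _ h => by simp at h

lemma connGameChromaticNumber_eq_of_forall_lt [Fintype V] [DecidableEq V]
    (hwin : AliceWinsColoringGame true G k)
    (hlose : ∀ j < k, ¬ AliceWinsColoringGame true G j) : connGameChromaticNumber G = k :=
  le_antisymm (Nat.sInf_le hwin) (le_csInf ⟨k, hwin⟩ fun j hj => not_lt.1 fun hjk => hlose j hjk hj)

end Colorable

section Minor

variable {V W : Type*} {G : SimpleGraph V} {H : SimpleGraph W}

/-- Connectivity of a branch set, weakened to the absence of isolated vertices so that it can be
decided by evaluation. -/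
def IsWeakBranchSet (G : SimpleGraph V) (s : Finset V) : Prop :=
  s.Nonempty ∧ ∀ v ∈ s, ∀ u ∈ s, u ≠ v → ∃ x ∈ s, G.Adj v x

def Touches (G : SimpleGraph V) (s t : Finset V) : Prop :=
  ∃ u ∈ s, ∃ v ∈ t, G.Adj u v

lemma IsMinorOf.exists_weakModel [Finite V] (h : IsMinorOf H G) :
    ∃ g : W → Finset V, (∀ w, IsWeakBranchSet G (g w)) ∧
      (∀ w w', w ≠ w' → Disjoint (g w) (g w')) ∧
      ∀ w w', H.Adj w w' → Touches G (g w) (g w') := by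
  obtain ⟨f, hne, hconn, hdisj, hadj⟩ := h
  refine ⟨fun w => (f w).toFinite.toFinset, fun w => ⟨by simpa using hne w, ?_⟩,
    fun w w' hw => by simpa using hdisj w w' hw,
    fun w w' hw => by simpa [Touches] using hadj w w' hw⟩
  intro v hv u hu huv
  rw [Set.Finite.mem_toFinset] at hv hu
  have : Nontrivial (f w) := ⟨⟨⟨v, hv⟩, ⟨u, hu⟩, fun e => huv (congrArg Subtype.val e).symm⟩⟩
  obtain ⟨x, hx⟩ := (hconn w).preconnected.exists_adj_of_nontrivial ⟨v, hv⟩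
  exact ⟨x, by simp, hx⟩

def HasWeakK4Model (G : SimpleGraph V) : Prop :=
  ∃ s₀, IsWeakBranchSet G s₀ ∧
  ∃ s₁, Disjoint s₀ s₁ ∧ Touches G s₀ s₁ ∧ IsWeakBranchSet G s₁ ∧
  ∃ s₂, Disjoint s₀ s₂ ∧ Disjoint s₁ s₂ ∧ Touches G s₀ s₂ ∧ Touches G s₁ s₂ ∧
    IsWeakBranchSet G s₂ ∧
  ∃ s₃, Disjoint s₀ s₃ ∧ Disjoint s₁ s₃ ∧ Disjoint s₂ s₃ ∧
    Touches G s₀ s₃ ∧ Touches G s₁ s₃ ∧ Touches G s₂ s₃ ∧ IsWeakBranchSet G s₃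

def HasWeakK23Model (G : SimpleGraph V) : Prop :=
  ∃ a₀, IsWeakBranchSet G a₀ ∧
  ∃ b₀, Disjoint a₀ b₀ ∧ Touches G a₀ b₀ ∧ IsWeakBranchSet G b₀ ∧
  ∃ a₁, Disjoint a₀ a₁ ∧ Disjoint b₀ a₁ ∧ Touches G a₁ b₀ ∧ IsWeakBranchSet G a₁ ∧
  ∃ b₁, Disjoint a₀ b₁ ∧ Disjoint b₀ b₁ ∧ Disjoint a₁ b₁ ∧
    Touches G a₀ b₁ ∧ Touches G a₁ b₁ ∧ IsWeakBranchSet G b₁ ∧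
  ∃ b₂, Disjoint a₀ b₂ ∧ Disjoint b₀ b₂ ∧ Disjoint a₁ b₂ ∧ Disjoint b₁ b₂ ∧
    Touches G a₀ b₂ ∧ Touches G a₁ b₂ ∧ IsWeakBranchSet G b₂

lemma IsMinorOf.hasWeakK4Model [Finite V] (h : IsMinorOf (completeGraph (Fin 4)) G) :
    HasWeakK4Model G := by
  obtain ⟨g, hg, hd, ht⟩ := h.exists_weakModel
  have ht : ∀ i j : Fin 4, i ≠ j → Touches G (g i) (g j) := ht
  exact ⟨g 0, hg 0, g 1, hd 0 1 (by decide), ht 0 1 (by decide), hg 1,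
    g 2, hd 0 2 (by decide), hd 1 2 (by decide), ht 0 2 (by decide), ht 1 2 (by decide), hg 2,
    g 3, hd 0 3 (by decide), hd 1 3 (by decide), hd 2 3 (by decide),
    ht 0 3 (by decide), ht 1 3 (by decide), ht 2 3 (by decide), hg 3⟩

lemma IsMinorOf.hasWeakK23Model [Finite V]
    (h : IsMinorOf (completeBipartiteGraph (Fin 2) (Fin 3)) G) : HasWeakK23Model G := by
  obtain ⟨g, hg, hd, ht⟩ := h.exists_weakModel
  have ht : ∀ i j, Touches G (g (.inl i)) (g (.inr j)) := fun i j => ht _ _ (by simp)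
  exact ⟨g (.inl 0), hg _, g (.inr 0), hd _ _ (by simp), ht 0 0, hg _,
    g (.inl 1), hd _ _ (by simp), hd _ _ (by simp), ht 1 0, hg _,
    g (.inr 1), hd _ _ (by simp), hd _ _ (by simp), hd _ _ (by simp), ht 0 1, ht 1 1, hg _,
    g (.inr 2), hd _ _ (by simp), hd _ _ (by simp), hd _ _ (by simp), hd _ _ (by simp),
    ht 0 2, ht 1 2, hg _⟩

lemma outerplanar_of_not_hasWeakModel [Finite V] (hK4 : ¬ HasWeakK4Model G)
    (hK23 : ¬ HasWeakK23Model G) : Outerplanar G :=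
  ⟨fun h => hK4 h.hasWeakK4Model, fun h => hK23 h.hasWeakK23Model⟩

variable [Fintype V] [DecidableEq V] [DecidableRel G.Adj]

instance : DecidablePred (IsWeakBranchSet G) := fun _ => by
  unfold IsWeakBranchSet; infer_instance

instance (s t : Finset V) : Decidable (Touches G s t) := by
  unfold Touches; infer_instance

set_option synthInstance.maxSize 1000 in
instance : Decidable (HasWeakK4Model G) := by
  unfold HasWeakK4Model; infer_instance

set_option synthInstance.maxSize 1000 in
instance : Decidable (HasWeakK23Model G) := by
  unfold HasWeakK23Model; infer_instance

end Minor

section GameDecidable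

variable {V : Type*} [Fintype V] [DecidableEq V] (conn : Bool) (G : SimpleGraph V)
  [DecidableRel G.Adj] (k : ℕ)

instance (c : V → Option (Fin k)) (v : V) (a : Fin k) : Decidable (LegalMove conn G c v a) := by
  unfold LegalMove ProperMove ConnMove; infer_instance

instance AliceWinsFrom.instDecidable :
    ∀ (n : ℕ) (b : Bool) (c : V → Option (Fin k)), Decidable (AliceWinsFrom conn G k n b c)
  | 0, _, _ => by unfold AliceWinsFrom; infer_instance
  | n + 1, _, _ => by
    have := AliceWinsFrom.instDecidable n
    unfold AliceWinsFrom; infer_instance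

instance : Decidable (AliceWinsColoringGame conn G k) := by
  unfold AliceWinsColoringGame; infer_instance

end GameDecidable

section HexagonWithChords

def hexagonWithChords : SimpleGraph (Fin 6) :=
  cycleGraph 6 ⊔ edge 1 5 ⊔ edge 2 5 ⊔ edge 2 4

/-- Adjacency through a neighbour table, which is cheap to evaluate in the kernel. -/
instance : DecidableRel hexagonWithChords.Adj := fun u v =>
  decidable_of_iff (v ∈ (![{1, 5}, {0, 2, 5}, {1, 3, 4, 5}, {2, 4}, {2, 3, 5}, {0, 1, 2, 4}] :
      Fin 6 → Finset (Fin 6)) u) (by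
    revert u v
    simp only [hexagonWithChords, sup_adj, edge_adj, cycleGraph_adj]
    decide)

lemma hexagonWithChords_connected : hexagonWithChords.Connected :=
  cycleGraph_connected.mono fun _ _ h => by simp [hexagonWithChords, h]

lemma hexagonWithChords_outerplanar : Outerplanar hexagonWithChords :=
  outerplanar_of_not_hasWeakModel (by decide +kernel) (by decide +kernel)

lemma not_cliqueFree_three_hexagonWithChords : ¬ hexagonWithChords.CliqueFree 3 :=
  fun h => h {0, 1, 5} (is3Clique_triple_iff.2 (by decide))

set_option maxRecDepth 100000 in
set_option maxHeartbeats 8000000 in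
lemma aliceWinsColoringGame_hexagonWithChords_four :
    AliceWinsColoringGame true hexagonWithChords 4 := by
  decide +kernel

set_option maxRecDepth 100000 in
set_option maxHeartbeats 8000000 in
lemma not_aliceWinsColoringGame_hexagonWithChords_three :
    ¬ AliceWinsColoringGame true hexagonWithChords 3 := by
  decide +kernel

lemma connGameChromaticNumber_hexagonWithChords :
    connGameChromaticNumber hexagonWithChords = 4 := by
  refine connGameChromaticNumber_eq_of_forall_lt
    aliceWinsColoringGame_hexagonWithChords_four fun j hj hwin => ?_
  rcases Nat.lt_succ_iff_lt_or_eq.1 hj with hj | rfl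
  · exact not_cliqueFree_three_hexagonWithChords (hwin.colorable.cliqueFree hj)
  · exact not_aliceWinsColoringGame_hexagonWithChords_three hwin

end HexagonWithChords

end ConnGame

/-- There exists a finite connected outerplanar simple graph `G` with
connected game chromatic number exactly 4. -/
theorem exists_outerplanar_connGameChromaticNumber_eq_four :
    ∃ (V : Type) (iF : Fintype V) (iD : DecidableEq V) (G : SimpleGraph V),
      @ConnGame.Outerplanar V G ∧ G.Connected ∧
        @ConnGame.connGameChromaticNumber V iF iD G = 4 :=
  ⟨Fin 6, inferInstance, inferInstance, ConnGame.hexagonWithChords,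
    ConnGame.hexagonWithChords_outerplanar, ConnGame.hexagonWithChords_connected,
    ConnGame.connGameChromaticNumber_hexagonWithChords⟩
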